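/- Let A be a unital C*-algebra. For any two elements h, h' of the Poincaré half-space H = { h ∈ A : Im(h) positive invertible }, there exists an invertible g ∈ A and y ∈ A with g*y selfadjoint such that (y + (g*)⁻¹ h) g⁻¹ = h'. That is, the Borel group of matrices [[g,0],[y,(g*)⁻¹]] acts transitively on H. -/

import Mathlib

/-!
A positive invertible `a` equals `star u * u` for the unit `u = √a`, so the congruence action
`a ↦ star g * a * g` of the unit group is transitive on positive invertibles. Choose `g` with
`star g * Im h' * g = Im h` and put `y = h' g - (g*)⁻¹ h`: then `g* y = g* h' g - h` has imaginary
part `g* Im(h') g - Im h = 0`, and `(y + (g*)⁻¹ h) g⁻¹ = h'`.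
-/

noncomputable def imPart {A : Type*} [CStarAlgebra A] (a : A) : A :=
  (2 * Complex.I)⁻¹ • (a - star a)

section ImPart

variable {A : Type*} [CStarAlgebra A]

lemma imPart_sub (a b : A) : imPart (a - b) = imPart a - imPart b := by
  simp only [imPart, star_sub, sub_sub_sub_comm, smul_sub]

lemma imPart_star_mul_mul (g a : A) : imPart (star g * a * g) = star g * imPart a * g := by
  simp only [imPart, star_mul, star_star, mul_assoc, ← mul_sub, ← sub_mul, mul_smul_comm,
    smul_mul_assoc]

lemma isSelfAdjoint_iff_imPart_eq_zero {a : A} : IsSelfAdjoint a ↔ imPart a = 0 := by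
  rw [imPart, smul_eq_zero_iff_right (by simp [Complex.I_ne_zero]), sub_eq_zero, eq_comm]
  rfl

end ImPart

section Congruence

variable {A : Type*} [CStarAlgebra A] [PartialOrder A] [StarOrderedRing A]

lemma IsStrictlyPositive.exists_unit_star_mul_self_eq {a : A} (ha : IsStrictlyPositive a) :
    ∃ u : Aˣ, star (u : A) * u = a :=
  ⟨(ha.isUnit_cfcSqrt a).unit, by
    simp [(CFC.sqrt_nonneg a).isSelfAdjoint.star_eq, CFC.sqrt_mul_sqrt_self a ha.nonneg]⟩

lemma IsStrictlyPositive.exists_unit_star_mul_mul_eq {a b : A} (ha : IsStrictlyPositive a)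
    (hb : IsStrictlyPositive b) : ∃ g : Aˣ, star (g : A) * b * g = a := by
  obtain ⟨l, rfl⟩ := ha.exists_unit_star_mul_self_eq
  obtain ⟨k, rfl⟩ := hb.exists_unit_star_mul_self_eq
  refine ⟨k⁻¹ * l, ?_⟩
  simp only [Units.val_mul, star_mul, mul_assoc, ← Units.coe_star, star_inv,
    Units.mul_inv_cancel_left, Units.inv_mul_cancel_left]

end Congruence

/-- The Borel group of matrices `[[g,0],[y,(g*)⁻¹]]` acts transitively on the Poincaré
half-space `H = { h : Im(h) positive invertible }` via `h ↦ (y + (g*)⁻¹ h) g⁻¹`. -/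
theorem borel_action_transitive {A : Type*} [CStarAlgebra A] [PartialOrder A]
    [StarOrderedRing A] (h h' : A)
    (hpos : 0 ≤ imPart h) (hinv : IsUnit (imPart h))
    (hpos' : 0 ≤ imPart h') (hinv' : IsUnit (imPart h')) :
    ∃ g y : A, IsUnit g ∧ IsSelfAdjoint (star g * y) ∧
      (y + Ring.inverse (star g) * h) * Ring.inverse g = h' := by
  obtain ⟨g, hg⟩ := (hinv.isStrictlyPositive hpos).exists_unit_star_mul_mul_eq
    (hinv'.isStrictlyPositive hpos')
  have inverse_star : Ring.inverse (star (g : A)) = star (↑g⁻¹ : A) := by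
    rw [← Units.coe_star, Ring.inverse_unit, ← star_inv, Units.coe_star]
  refine ⟨g, h' * g - Ring.inverse (star (g : A)) * h, g.isUnit, ?_, ?_⟩
  · have star_g_mul_y :
        star (g : A) * (h' * g - Ring.inverse (star (g : A)) * h) = star (g : A) * h' * g - h := by
      rw [inverse_star, mul_sub, ← mul_assoc, ← mul_assoc, ← star_mul, Units.inv_mul, star_one,
        one_mul, mul_assoc]
    rw [star_g_mul_y, isSelfAdjoint_iff_imPart_eq_zero, imPart_sub, imPart_star_mul_mul, hg,
      sub_self]
  · rw [sub_add_cancel, Ring.inverse_unit, Units.mul_inv_cancel_right]
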